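/- Generalized Sylvester criterion for positive semidefiniteness: if an n × n Hermitian complex matrix G has all of its principal minors nonnegative (i.e., for every nonempty subset S of {1, …, n}, the determinant of the submatrix of G with rows and columns indexed by S is a nonnegative real number), then G is positive semidefinite, and hence there exists a system of vectors g₁, …, gₙ ∈ ℂ^n such that Gᵢⱼ = ⟨gᵢ, gⱼ⟩ for all i, j. -/

import Mathlib

open scoped InnerProductSpace ComplexOrder

lemma det_fintype_congr {m : Type*} [DecidableEq m] {F1 F2 : Fintype m}
    (M : Matrix m m ℂ) :
    @Matrix.det m _ F1 ℂ _ M = @Matrix.det m _ F2 ℂ _ M := by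
  rw [Subsingleton.elim F1 F2]

open Matrix in
lemma det_piecewise_smul_one {n : ℕ} (A : Matrix (Fin n) (Fin n) ℂ) (t : ℂ)
    (s : Finset (Fin n)) :
    (Matrix.of (s.piecewise A (t • (1 : Matrix (Fin n) (Fin n) ℂ)))).det
      = t ^ (n - s.card) *
        (A.submatrix (Subtype.val : {i // i ∈ s} → Fin n) Subtype.val).det := by
  classical
  set M : Matrix (Fin n) (Fin n) ℂ :=
    Matrix.of (s.piecewise A (t • (1 : Matrix (Fin n) (Fin n) ℂ))) with hM
  have h0 : ∀ i, ¬ (i ∈ s) → ∀ j, j ∈ s → M i j = 0 := by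
    intro i hi j hj
    rw [hM]
    have hij : i ≠ j := fun h => hi (h ▸ hj)
    simp [Finset.piecewise, hi, Matrix.one_apply, hij]
  have h := Matrix.twoBlockTriangular_det M (fun i => i ∈ s) h0
  have h1 : (M.toSquareBlockProp (fun i => i ∈ s)).det
      = (A.submatrix (Subtype.val : {i // i ∈ s} → Fin n) Subtype.val).det := by
    congr 1
    ext i j
    simp only [Matrix.toSquareBlockProp, Matrix.toBlock_apply, Matrix.submatrix_apply, hM]
    simp [Finset.piecewise, i.2]
  have h2 : (M.toSquareBlockProp (fun i => ¬ (i ∈ s))).det = t ^ (n - s.card) := by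
    have : M.toSquareBlockProp (fun i => ¬ (i ∈ s))
        = t • (1 : Matrix {i // ¬ (i ∈ s)} {i // ¬ (i ∈ s)} ℂ) := by
      ext i j
      simp only [Matrix.toSquareBlockProp, Matrix.toBlock_apply, hM, Matrix.of_apply]
      simp only [Finset.piecewise, if_neg i.2]
      by_cases hij : i = j
      · subst hij; simp [Matrix.one_apply]
      · have : (i : Fin n) ≠ j := fun h => hij (Subtype.ext h)
        simp [Matrix.one_apply, this, hij]
    have hcard : Fintype.card {i // ¬ (i ∈ s)} = n - s.card := by
      simp [Fintype.card_subtype_compl]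
    rw [this, Matrix.smul_one_eq_diagonal, Matrix.det_diagonal, Finset.prod_const,
      Finset.card_univ, hcard]
  have h2' : (M.toSquareBlockProp fun i => ¬(fun i => i ∈ s) i).det = t ^ (n - s.card) := h2
  rw [h, mul_comm]
  exact congrArg₂ (· * ·) ((det_fintype_congr _).trans h2') ((det_fintype_congr _).trans h1)

open Matrix in
lemma det_add_smul_one {n : ℕ} (A : Matrix (Fin n) (Fin n) ℂ) (t : ℂ) :
    (A + t • (1 : Matrix (Fin n) (Fin n) ℂ)).det
      = ∑ s : Finset (Fin n), t ^ (n - s.card) *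
          (A.submatrix (Subtype.val : {i // i ∈ s} → Fin n) Subtype.val).det := by
  classical
  have h := (Matrix.detRowAlternating (R := ℂ) (n := Fin n)).toMultilinearMap.map_add_univ
    (A : Fin n → Fin n → ℂ) (t • (1 : Matrix (Fin n) (Fin n) ℂ) : Fin n → Fin n → ℂ)
  calc (A + t • (1 : Matrix (Fin n) (Fin n) ℂ)).det
      = ∑ s : Finset (Fin n),
          (Matrix.of (s.piecewise A (t • (1 : Matrix (Fin n) (Fin n) ℂ)))).det := h
    _ = _ := Finset.sum_congr rfl fun s _ => det_piecewise_smul_one A t s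

open Matrix in
/-- Generalized Sylvester criterion: if an n × n Hermitian
complex matrix G has all of its principal minors nonnegative (for every
nonempty S ⊆ {1, …, n}, the determinant of the submatrix of G with rows and
columns indexed by S is a nonnegative real), then G is positive semidefinite,
and hence is the Gram matrix of some system of vectors g₁, …, gₙ ∈ ℂ^n. -/
theorem sylvester_criterion_posSemidef (n : ℕ) (G : Matrix (Fin n) (Fin n) ℂ)
    (hH : G.IsHermitian)
    (hminors : ∀ S : Finset (Fin n), S.Nonempty →
      ∃ r : ℝ, 0 ≤ r ∧
        (G.submatrix (Subtype.val : {i // i ∈ S} → Fin n)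
          (Subtype.val : {i // i ∈ S} → Fin n)).det = (r : ℂ)) :
    G.PosSemidef ∧
      ∃ g : Fin n → EuclideanSpace ℂ (Fin n),
        ∀ i j : Fin n, G i j = ⟪g i, g j⟫_ℂ := by
  classical
  -- choose real values of the principal minors
  let r : Finset (Fin n) → ℝ := fun S =>
    if h : S.Nonempty then (hminors S h).choose else 1
  have hr0 : ∀ S, 0 ≤ r S := by
    intro S
    by_cases h : S.Nonempty
    · simp only [r, dif_pos h]; exact (hminors S h).choose_spec.1
    · simp [r, dif_neg h]
  have hrdet : ∀ S : Finset (Fin n),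
      (G.submatrix (Subtype.val : {i // i ∈ S} → Fin n) Subtype.val).det = ((r S : ℝ) : ℂ) := by
    intro S
    by_cases h : S.Nonempty
    · simp only [r, dif_pos h]; exact (hminors S h).choose_spec.2
    · have hS : S = ∅ := Finset.not_nonempty_iff_eq_empty.mp h
      subst hS
      haveI : IsEmpty {i // i ∈ (∅ : Finset (Fin n))} :=
        ⟨fun x => (Finset.notMem_empty _ x.2)⟩
      simp [r, Matrix.det_isEmpty]
  -- positivity of det (G + t • 1) for t > 0
  have hpos : ∀ t : ℝ, 0 < t → (G + (t : ℂ) • (1 : Matrix (Fin n) (Fin n) ℂ)).det ≠ 0 := by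
    intro t ht
    rw [det_add_smul_one G (t : ℂ)]
    have : (∑ s : Finset (Fin n), ((t : ℂ)) ^ (n - s.card) *
          (G.submatrix (Subtype.val : {i // i ∈ s} → Fin n) Subtype.val).det)
        = ((∑ s : Finset (Fin n), t ^ (n - s.card) * r s : ℝ) : ℂ) := by
      push_cast
      refine Finset.sum_congr rfl fun s _ => ?_
      rw [hrdet s]
    rw [this]
    have hsumpos : 0 < ∑ s : Finset (Fin n), t ^ (n - s.card) * r s := by
      have hterm : ∀ s ∈ (Finset.univ : Finset (Finset (Fin n))),
          0 ≤ t ^ (n - s.card) * r s := fun s _ =>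
        mul_nonneg (pow_nonneg ht.le _) (hr0 s)
      have hmem : (∅ : Finset (Fin n)) ∈ (Finset.univ : Finset (Finset (Fin n))) :=
        Finset.mem_univ _
      have h1 : t ^ (n - (∅ : Finset (Fin n)).card) * r ∅ ≤
          ∑ s : Finset (Fin n), t ^ (n - s.card) * r s :=
        Finset.single_le_sum hterm hmem
      have h2 : (0 : ℝ) < t ^ (n - (∅ : Finset (Fin n)).card) * r ∅ := by
        have : r ∅ = 1 := by simp [r]
        rw [this, mul_one]
        exact pow_pos ht _
      linarith
    exact_mod_cast hsumpos.ne'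
  -- eigenvalues are nonnegative
  have heig : ∀ i, 0 ≤ hH.eigenvalues i := by
    intro i
    by_contra hneg
    push_neg at hneg
    set μ := hH.eigenvalues i with hμ
    set t : ℝ := -μ with htdef
    have ht : 0 < t := by rw [htdef]; linarith
    have hv : G *ᵥ ⇑(hH.eigenvectorBasis i) = μ • ⇑(hH.eigenvectorBasis i) :=
      hH.mulVec_eigenvectorBasis i
    have hvne : ⇑(hH.eigenvectorBasis i) ≠ 0 := by
      intro h
      have := hH.eigenvectorBasis.orthonormal.ne_zero i
      apply this
      ext k
      exact congrFun h k
    have hker : (G + (t : ℂ) • (1 : Matrix (Fin n) (Fin n) ℂ)) *ᵥ ⇑(hH.eigenvectorBasis i) = 0 := by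
      rw [Matrix.add_mulVec, Matrix.smul_mulVec, Matrix.one_mulVec, hv]
      ext k
      simp only [htdef, Pi.add_apply, Pi.smul_apply, Pi.zero_apply, smul_eq_mul,
        Complex.real_smul]
      push_cast
      ring
    have : (G + (t : ℂ) • (1 : Matrix (Fin n) (Fin n) ℂ)).det = 0 :=
      Matrix.exists_mulVec_eq_zero_iff.mp ⟨_, hvne, hker⟩
    exact hpos t ht this
  have hPSD : G.PosSemidef := hH.posSemidef_iff_eigenvalues_nonneg.mpr heig
  refine ⟨hPSD, ?_⟩
  obtain ⟨B, hB⟩ : ∃ B : Matrix (Fin n) (Fin n) ℂ, G = Bᴴ * B := by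
    open scoped MatrixOrder in
    obtain ⟨X, hX, -, hXX⟩ :=
      sub_zero G ▸ CFC.exists_sqrt_of_isSelfAdjoint_of_quasispectrumRestricts hPSD.isHermitian
        (QuasispectrumRestricts.nnreal_of_nonneg hPSD.nonneg)
    rw [sub_zero] at hXX
    exact ⟨X, by rw [← hXX]; exact congrArg (· * X) hX.symm⟩
  refine ⟨fun i => (WithLp.toLp 2 (fun k => B k i) : EuclideanSpace ℂ (Fin n)), fun i j => ?_⟩
  rw [hB]
  simp [Matrix.mul_apply, Matrix.conjTranspose_apply, PiLp.inner_apply, RCLike.inner_apply,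
    mul_comm]
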